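/- Let Π be a finite set of processes each holding an input value in a type V, and suppose all processes are correct and hold the same input v. Model Algorithm 1 as: every converge-committee member receives W INIT messages all carrying v and with initial value v, hence sends is_content = true with a certificate for v; every process then counts at least W ≥ B + 1 content messages and inputs false to a binary BA satisfying strong unanimity. Then the binary BA outputs false and every process decides v. -/
import Mathlib

theorem validity_failure_free {α V : Type*}
    (Pi : Finset α) (hPi : Pi.Nonempty)
    (v bot : V) (W B : ℕ) (hWB : B + 1 ≤ W)
    (count : α → ℕ) (hcount : ∀ p ∈ Pi, W ≤ count p)
    (alert : α → Bool) (halert : ∀ p ∈ Pi, alert p = decide (count p < B + 1))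
    (b : Bool) (hunanimity : ∀ a : Bool, (∀ p ∈ Pi, alert p = a) → b = a)
    (certval : α → V) (hcert : ∀ p ∈ Pi, certval p = v)
    (decision : α → V)
    (hdec : ∀ p ∈ Pi, decision p = if b then bot else certval p) :
    b = false ∧ ∀ p ∈ Pi, decision p = v := by
  have hb : b = false := by
    apply hunanimity
    intro p hp
    rw [halert p hp]
    simp only [decide_eq_false_iff_not, not_lt]
    exact hWB.trans (hcount p hp)
  refine ⟨hb, fun p hp => ?_⟩
  rw [hdec p hp, hb, if_neg (by simp), hcert p hp]
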